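/- arXiv:2411.15803 — 2 statements merged into one kernel-verified Lean document; each statement's English description precedes it below -/
import Mathlib

section
/- For every k with 0 < k < 1, the function k ↦ K(k) is differentiable at k with derivative dK/dk = (E(k) − (1−k²)·K(k)) / (k·(1−k²)). -/
/-!
Write `Δ(k, θ) = √(1 - k² sin² θ)` (`ellipticDelta`), so that `K = ∫ 1/Δ` and `E = ∫ Δ` over
`[0, π/2]`. For `|k| < 1` the `k`-derivative `k sin² θ / Δ³` of `1/Δ` is bounded uniformly on a
neighbourhood of `k`, so `K'(k) = k ∫ sin² θ / Δ³`. The remaining integral is eliminated by the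
exact derivative `d/dθ (k² sin θ cos θ / Δ) = Δ - (1 - k²)/Δ - k²(1 - k²) sin² θ / Δ³`: its
primitive vanishes at `0` and `π/2`, so `k²(1 - k²) ∫ sin² θ / Δ³ = E - (1 - k²) K`.
-/

open Real

/-- The complete elliptic integral of the first kind. -/
noncomputable def EllipticK (k : ℝ) : ℝ :=
  ∫ θ in (0:ℝ)..(π / 2), 1 / Real.sqrt (1 - k ^ 2 * Real.sin θ ^ 2)

/-- The complete elliptic integral of the second kind. -/
noncomputable def EllipticE (k : ℝ) : ℝ :=
  ∫ θ in (0:ℝ)..(π / 2), Real.sqrt (1 - k ^ 2 * Real.sin θ ^ 2)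

open MeasureTheory

noncomputable def ellipticDelta (k θ : ℝ) : ℝ := √(1 - k ^ 2 * sin θ ^ 2)

lemma sqrt_one_sub_sq_le_ellipticDelta (k θ : ℝ) : √(1 - k ^ 2) ≤ ellipticDelta k θ := by
  refine Real.sqrt_le_sqrt ?_
  nlinarith [sin_sq_le_one θ, sq_nonneg k]

lemma ellipticDelta_pos {k : ℝ} (hk : |k| < 1) (θ : ℝ) : 0 < ellipticDelta k θ :=
  (Real.sqrt_pos.2 (by nlinarith [sq_lt_one_iff_abs_lt_one k |>.2 hk])).trans_le
    (sqrt_one_sub_sq_le_ellipticDelta k θ)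

lemma ellipticDelta_sq {k : ℝ} (hk : |k| < 1) (θ : ℝ) :
    ellipticDelta k θ ^ 2 = 1 - k ^ 2 * sin θ ^ 2 :=
  Real.sq_sqrt <| Real.sqrt_pos.1 (ellipticDelta_pos hk θ) |>.le

@[fun_prop]
lemma continuous_ellipticDelta (k : ℝ) : Continuous (ellipticDelta k) := by
  unfold ellipticDelta; fun_prop

lemma continuous_one_div_ellipticDelta {k : ℝ} (hk : |k| < 1) :
    Continuous fun θ => 1 / ellipticDelta k θ :=
  continuous_const.div (continuous_ellipticDelta k) fun θ => (ellipticDelta_pos hk θ).ne'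

lemma continuous_sin_sq_div_ellipticDelta_pow_three {k : ℝ} (hk : |k| < 1) :
    Continuous fun θ => sin θ ^ 2 / ellipticDelta k θ ^ 3 := by
  fun_prop (disch := exact fun θ => pow_ne_zero 3 (ellipticDelta_pos hk θ).ne')

lemma hasDerivAt_one_div_ellipticDelta {x : ℝ} (hx : |x| < 1) (θ : ℝ) :
    HasDerivAt (fun x => 1 / ellipticDelta x θ) (x * (sin θ ^ 2 / ellipticDelta x θ ^ 3)) x := by
  have hΔ := ellipticDelta_pos hx θ
  have hΔ' := (((hasDerivAt_pow 2 x).mul_const (sin θ ^ 2)).const_sub 1).sqrt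
    (Real.sqrt_pos.1 hΔ).ne'
  refine ((hasDerivAt_const x (1 : ℝ)).div hΔ' hΔ.ne').congr_deriv ?_
  unfold ellipticDelta at *
  field_simp
  ring

lemma hasDerivAt_sin_mul_cos_div_ellipticDelta {k : ℝ} (hk : |k| < 1) (θ : ℝ) :
    HasDerivAt (fun θ => k ^ 2 * (sin θ * cos θ) / ellipticDelta k θ)
      (ellipticDelta k θ - (1 - k ^ 2) * (1 / ellipticDelta k θ)
        - k ^ 2 * (1 - k ^ 2) * (sin θ ^ 2 / ellipticDelta k θ ^ 3)) θ := by
  have hΔ := ellipticDelta_pos hk θ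
  have hΔsq := ellipticDelta_sq hk θ
  have hnum := ((hasDerivAt_sin θ).mul (hasDerivAt_cos θ)).const_mul (k ^ 2)
  have hden := (((hasDerivAt_sin θ).pow 2).const_mul (k ^ 2)).const_sub 1 |>.sqrt
    (Real.sqrt_pos.1 hΔ).ne'
  refine (hnum.div hden hΔ.ne').congr_deriv ?_
  unfold ellipticDelta at *
  simp only [Pi.mul_apply, Pi.pow_apply]
  field_simp
  norm_num
  rw [hΔsq]
  linear_combination 2 * k ^ 2 * cos_sq' θ

lemma integral_sin_sq_div_ellipticDelta_pow_three {k : ℝ} (hk : |k| < 1) :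
    k ^ 2 * (1 - k ^ 2) * ∫ θ in (0)..(π / 2), sin θ ^ 2 / ellipticDelta k θ ^ 3
      = EllipticE k - (1 - k ^ 2) * EllipticK k := by
  have hE := (continuous_ellipticDelta k).intervalIntegrable (μ := volume) 0 (π / 2)
  have hK := (continuous_one_div_ellipticDelta hk).intervalIntegrable (μ := volume) 0 (π / 2)
  have hS := (continuous_sin_sq_div_ellipticDelta_pow_three hk).intervalIntegrable
    (μ := volume) 0 (π / 2)
  have hFTC : ∫ θ in (0)..(π / 2), (ellipticDelta k θ - (1 - k ^ 2) * (1 / ellipticDelta k θ)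
      - k ^ 2 * (1 - k ^ 2) * (sin θ ^ 2 / ellipticDelta k θ ^ 3)) = 0 := by
    rw [intervalIntegral.integral_eq_sub_of_hasDerivAt
      (fun θ _ => hasDerivAt_sin_mul_cos_div_ellipticDelta hk θ)
      ((hE.sub (hK.const_mul _)).sub (hS.const_mul _))]
    simp
  rw [intervalIntegral.integral_sub (hE.sub (hK.const_mul _)) (hS.const_mul _),
    intervalIntegral.integral_sub hE (hK.const_mul _), intervalIntegral.integral_const_mul,
    intervalIntegral.integral_const_mul] at hFTC
  change _ = (∫ θ in (0)..(π / 2), ellipticDelta k θ)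
    - (1 - k ^ 2) * ∫ θ in (0)..(π / 2), 1 / ellipticDelta k θ
  linear_combination -hFTC

lemma norm_mul_sin_sq_div_ellipticDelta_pow_three_le {x m : ℝ} (hx : |x| ≤ m) (hm : m < 1)
    (θ : ℝ) : ‖x * (sin θ ^ 2 / ellipticDelta x θ ^ 3)‖ ≤ 1 / √(1 - m ^ 2) ^ 3 := by
  have hm0 : 0 < √(1 - m ^ 2) := Real.sqrt_pos.2 (by nlinarith [abs_nonneg x])
  have hΔ : √(1 - m ^ 2) ≤ ellipticDelta x θ :=
    (Real.sqrt_le_sqrt (by nlinarith [sq_abs x, abs_nonneg x])).trans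
      (sqrt_one_sub_sq_le_ellipticDelta x θ)
  have hΔ3 := pow_pos (hm0.trans_le hΔ) 3
  rw [Real.norm_eq_abs, abs_mul, abs_div, abs_of_nonneg (sq_nonneg (sin θ)), abs_of_pos hΔ3]
  calc |x| * (sin θ ^ 2 / ellipticDelta x θ ^ 3) ≤ 1 * (1 / √(1 - m ^ 2) ^ 3) :=
        mul_le_mul (by linarith)
          (div_le_div₀ zero_le_one (sin_sq_le_one θ) (pow_pos hm0 3)
            (pow_le_pow_left₀ hm0.le hΔ 3))
          (div_nonneg (sq_nonneg _) hΔ3.le) zero_le_one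
    _ = 1 / √(1 - m ^ 2) ^ 3 := one_mul _

lemma hasDerivAt_EllipticK_integral {k : ℝ} (hk : |k| < 1) :
    HasDerivAt EllipticK (k * ∫ θ in (0)..(π / 2), sin θ ^ 2 / ellipticDelta k θ ^ 3) k := by
  obtain ⟨m, hkm, hm⟩ := exists_between hk
  have hball : ∀ x ∈ Metric.ball k (m - |k|), |x| ≤ m := fun x hx => by
    rw [Metric.mem_ball, Real.dist_eq] at hx
    linarith [abs_sub_abs_le_abs_sub x k]
  rw [← intervalIntegral.integral_const_mul]
  change HasDerivAt (fun x => ∫ θ in (0)..(π / 2), 1 / ellipticDelta x θ) _ k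
  refine (intervalIntegral.hasDerivAt_integral_of_dominated_loc_of_deriv_le
    (μ := volume) (F' := fun x θ => x * (sin θ ^ 2 / ellipticDelta x θ ^ 3))
    (Metric.ball_mem_nhds k (sub_pos.2 hkm)) ?_ ?_ ?_ ?_
    (intervalIntegrable_const (c := 1 / √(1 - m ^ 2) ^ 3)) ?_).2
  · exact .of_forall fun x =>
      ((continuous_ellipticDelta x).measurable.const_div 1).aestronglyMeasurable
  · exact (continuous_one_div_ellipticDelta hk).intervalIntegrable (μ := volume) 0 (π / 2)
  · exact ((continuous_sin_sq_div_ellipticDelta_pow_three hk).const_mul k).aestronglyMeasurable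
  · exact .of_forall fun θ _ x hx =>
      norm_mul_sin_sq_div_ellipticDelta_pow_three_le (hball x hx) hm θ
  · exact .of_forall fun θ _ x hx =>
      hasDerivAt_one_div_ellipticDelta ((hball x hx).trans_lt hm) θ

/-- For `0 < k < 1`, `K` is differentiable at `k` with
`dK/dk = (E(k) − (1 − k²)·K(k)) / (k·(1 − k²))`. -/
theorem hasDerivAt_EllipticK (k : ℝ) (hk0 : 0 < k) (hk1 : k < 1) :
    HasDerivAt EllipticK
      ((EllipticE k - (1 - k ^ 2) * EllipticK k) / (k * (1 - k ^ 2))) k := by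
  have hk : |k| < 1 := abs_lt.2 ⟨by linarith, hk1⟩
  have hk' : 1 - k ^ 2 ≠ 0 := by nlinarith
  convert hasDerivAt_EllipticK_integral hk using 1
  rw [← integral_sin_sq_div_ellipticDelta_pow_three hk]
  field_simp
end

section
/- The singular value function of the second kind tends to 1/π: as r → ∞ (r real, r > 0), α(r) = E(√(1−k_r²))/K(k_r) − π/(4·K(k_r)²) tends to 1/π. -/
open Real Filter

/-- The one-variable Jacobi theta function `θ₂(q) = ∑_{n ∈ ℤ} q^((n + 1/2)²)`. -/
noncomputable def theta2 (q : ℝ) : ℝ := ∑' n : ℤ, q ^ (((n : ℝ) + 1 / 2) ^ 2)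

/-- The one-variable Jacobi theta function `θ₃(q) = ∑_{n ∈ ℤ} q^(n²)`. -/
noncomputable def theta3 (q : ℝ) : ℝ := ∑' n : ℤ, q ^ ((n : ℝ) ^ 2)

/-- The singular value `k_r = λ*(r) = θ₂(q)²/θ₃(q)²` with `q = exp(−π√r)`. -/
noncomputable def kSing (r : ℝ) : ℝ :=
  theta2 (Real.exp (-(π * Real.sqrt r))) ^ 2 / theta3 (Real.exp (-(π * Real.sqrt r))) ^ 2

/-- The Ramanujan g-invariant `g_r = ((1 − k_r²)/(2 k_r))^(1/12)`. -/
noncomputable def gRam (r : ℝ) : ℝ := ((1 - kSing r ^ 2) / (2 * kSing r)) ^ ((1 : ℝ) / 12)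

/-- The singular value function of the second kind
`α(r) = E(√(1 − k_r²))/K(k_r) − π/(4·K(k_r)²)`. -/
noncomputable def alphaS (r : ℝ) : ℝ :=
  EllipticE (Real.sqrt (1 - kSing r ^ 2)) / EllipticK (kSing r) -
    π / (4 * EllipticK (kSing r) ^ 2)

/-! As `r → ∞`, the nome `q = exp(-π√r)` tends to `0⁺`. By dominated convergence `θ₂(q) → 0`,
while `θ₃(q) ≥ 1`, so `k_r → 0`. Comparing integrands gives `π/2 ≤ K(k) ≤ (π/2)/√(1 - k²)` and
`1 ≤ E(k) ≤ 1 + √(1 - k²)`, hence `K(k_r) → π/2`, `E(√(1 - k_r²)) → 1`, and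
`α(r) → 2/π - π/π² = 1/π`. -/

open Topology

lemma summable_rpow_sq_add {q : ℝ} (hq0 : 0 < q) (hq1 : q < 1) (a : ℝ) :
    Summable fun n : ℤ => q ^ (((n : ℝ) + a) ^ 2) := by
  have hgeom : Summable fun n : ℤ => q ^ |(n : ℝ)| := by
    refine summable_int_iff_summable_nat_and_neg.mpr ⟨?_, ?_⟩ <;>
      simpa [Real.rpow_natCast] using summable_geometric_of_lt_one hq0.le hq1
  refine Summable.of_nonneg_of_le (fun n => by positivity) (fun n => ?_)
    (hgeom.mul_left (q ^ (-(|a| + 1 / 4))))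
  rw [← Real.rpow_add hq0]
  apply Real.rpow_le_rpow_of_exponent_ge hq0 hq1.le
  -- `x² ≥ |x| - 1/4` applied to `x = n + a`
  have htri : |(n : ℝ)| ≤ |(n : ℝ) + a| + |a| := by
    simpa using abs_sub ((n : ℝ) + a) a
  nlinarith [sq_abs ((n : ℝ) + a), sq_nonneg (|(n : ℝ) + a| - 1 / 2)]

lemma one_le_theta3 {q : ℝ} (hq0 : 0 < q) (hq1 : q < 1) : 1 ≤ theta3 q := by
  have hsum : Summable fun n : ℤ => q ^ ((n : ℝ) ^ 2) := by
    simpa using summable_rpow_sq_add hq0 hq1 0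
  simpa [theta3] using hsum.le_tsum 0 fun n _ => by positivity

lemma tendsto_theta2_nhdsGT_zero : Tendsto theta2 (𝓝[>] 0) (𝓝 0) := by
  have hterm (n : ℤ) : Tendsto (fun q : ℝ => q ^ (((n : ℝ) + 1 / 2) ^ 2)) (𝓝[>] 0) (𝓝 0) := by
    have hexp : ((n : ℝ) + 1 / 2) ^ 2 ≠ 0 := by
      refine pow_ne_zero _ fun h => ?_
      have : (2 * n + 1 : ℤ) = 0 := by exact_mod_cast (by linarith : (2 * n + 1 : ℝ) = 0)
      omega
    have h := (continuousAt_rpow_const 0 (((n : ℝ) + 1 / 2) ^ 2)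
      (Or.inr (sq_nonneg _))).tendsto.mono_left (nhdsWithin_le_nhds (s := Set.Ioi 0))
    rwa [zero_rpow hexp] at h
  have hbound : ∀ᶠ q in 𝓝[>] (0 : ℝ), ∀ n : ℤ,
      ‖q ^ (((n : ℝ) + 1 / 2) ^ 2)‖ ≤ (1 / 2 : ℝ) ^ (((n : ℝ) + 1 / 2) ^ 2) := by
    filter_upwards [Ioo_mem_nhdsGT (by norm_num : (0 : ℝ) < 1 / 2)] with q hq n
    rw [Real.norm_of_nonneg (by positivity [hq.1])]
    exact Real.rpow_le_rpow hq.1.le hq.2.le (sq_nonneg _)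
  have h := tendsto_tsum_of_dominated_convergence
    (summable_rpow_sq_add (by norm_num) (by norm_num) (1 / 2)) hterm hbound
  rwa [tsum_zero] at h

lemma tendsto_exp_neg_pi_mul_sqrt : Tendsto (fun r => exp (-(π * √r))) atTop (𝓝[>] 0) :=
  tendsto_exp_atBot_nhdsGT.comp <| tendsto_neg_atTop_atBot.comp <|
    tendsto_sqrt_atTop.const_mul_atTop pi_pos

lemma kSing_le_theta2_sq {r : ℝ} (hr : 0 < r) :
    kSing r ≤ theta2 (exp (-(π * √r))) ^ 2 := by
  have hq1 : exp (-(π * √r)) < 1 := by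
    rw [exp_lt_one_iff, neg_lt_zero]
    exact mul_pos pi_pos (sqrt_pos.mpr hr)
  exact div_le_self (sq_nonneg _) (one_le_pow₀ (one_le_theta3 (exp_pos _) hq1))

lemma tendsto_kSing_atTop : Tendsto kSing atTop (𝓝 0) := by
  have hθ := (tendsto_theta2_nhdsGT_zero.comp tendsto_exp_neg_pi_mul_sqrt).pow 2
  rw [zero_pow two_ne_zero] at hθ
  refine tendsto_of_tendsto_of_tendsto_of_le_of_le' tendsto_const_nhds hθ
    (Eventually.of_forall fun r => div_nonneg (sq_nonneg _) (sq_nonneg _)) ?_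
  filter_upwards [eventually_gt_atTop 0] with r hr
  exact kSing_le_theta2_sq hr

section Elliptic

variable {k : ℝ}

lemma continuous_ellipticK_integrand (hk : k ^ 2 < 1) :
    Continuous fun θ => 1 / √(1 - k ^ 2 * sin θ ^ 2) := by
  refine continuous_const.div (by fun_prop) fun θ => (sqrt_pos.mpr ?_).ne'
  nlinarith [sin_sq_le_one θ, sq_nonneg (sin θ)]

lemma pi_div_two_le_ellipticK (hk : k ^ 2 < 1) : π / 2 ≤ EllipticK k := by
  have h : ∫ _ in (0 : ℝ)..π / 2, (1 : ℝ) ≤ EllipticK k :=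
    intervalIntegral.integral_mono_on (by positivity) intervalIntegrable_const
      ((continuous_ellipticK_integrand hk).intervalIntegrable 0 (π / 2)) fun θ _ =>
        one_le_one_div (sqrt_pos.mpr (by nlinarith [sin_sq_le_one θ, sq_nonneg (sin θ)]))
          (sqrt_le_one.mpr (by nlinarith [sq_nonneg (sin θ), sq_nonneg k]))
  simpa using h

lemma ellipticK_le (hk : k ^ 2 < 1) : EllipticK k ≤ π / 2 / √(1 - k ^ 2) := by
  have h : EllipticK k ≤ ∫ _ in (0 : ℝ)..π / 2, 1 / √(1 - k ^ 2) :=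
    intervalIntegral.integral_mono_on (by positivity)
      ((continuous_ellipticK_integrand hk).intervalIntegrable 0 (π / 2)) intervalIntegrable_const
      fun θ _ => one_div_le_one_div_of_le (sqrt_pos.mpr (by linarith))
        (sqrt_le_sqrt (by nlinarith [sin_sq_le_one θ, sq_nonneg k]))
  simpa [div_eq_mul_inv, mul_comm] using h

lemma tendsto_ellipticK_zero : Tendsto EllipticK (𝓝 0) (𝓝 (π / 2)) := by
  have hupper : Tendsto (fun k : ℝ => π / 2 / √(1 - k ^ 2)) (𝓝 0) (𝓝 (π / 2)) := by
    have h : ContinuousAt (fun k : ℝ => π / 2 / √(1 - k ^ 2)) 0 :=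
      continuousAt_const.div (by fun_prop) (by simp)
    simpa using h.tendsto
  have hk : ∀ᶠ k : ℝ in 𝓝 0, k ^ 2 < 1 :=
    ((continuous_pow 2).tendsto' (0 : ℝ) 0 (by simp)).eventually_lt_const one_pos
  refine tendsto_of_tendsto_of_tendsto_of_le_of_le' tendsto_const_nhds hupper ?_ ?_
  · filter_upwards [hk] with k hk using pi_div_two_le_ellipticK hk
  · filter_upwards [hk] with k hk using ellipticK_le hk

lemma one_le_ellipticE (hk : k ^ 2 ≤ 1) : 1 ≤ EllipticE k := by
  have h : ∫ θ in (0 : ℝ)..π / 2, cos θ ≤ EllipticE k :=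
    intervalIntegral.integral_mono_on (by positivity) (continuous_cos.intervalIntegrable _ _)
      ((by fun_prop : Continuous fun θ => √(1 - k ^ 2 * sin θ ^ 2)).intervalIntegrable _ _)
      fun θ _ => le_sqrt_of_sq_le (by nlinarith [sin_sq_add_cos_sq θ, sq_nonneg (sin θ)])
  simpa using h

lemma ellipticE_le (hk : k ^ 2 ≤ 1) : EllipticE k ≤ 1 + √(1 - k ^ 2) := by
  set k' := √(1 - k ^ 2)
  have hk' : k' ^ 2 = 1 - k ^ 2 := sq_sqrt (by linarith)
  -- `1 - k² sin² θ = cos² θ + k'² sin² θ ≤ (cos θ + k' sin θ)²` on `[0, π/2]`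
  have h : EllipticE k ≤ ∫ θ in (0 : ℝ)..π / 2, (cos θ + k' * sin θ) :=
    intervalIntegral.integral_mono_on (by positivity)
      ((by fun_prop : Continuous fun θ => √(1 - k ^ 2 * sin θ ^ 2)).intervalIntegrable _ _)
      ((by fun_prop : Continuous fun θ => cos θ + k' * sin θ).intervalIntegrable _ _)
      fun θ hθ => by
        have hcos : 0 ≤ cos θ := cos_nonneg_of_mem_Icc ⟨by linarith [hθ.1, pi_pos], hθ.2⟩
        have hsin : 0 ≤ sin θ := sin_nonneg_of_nonneg_of_le_pi hθ.1 (by linarith [hθ.2, pi_pos])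
        rw [sqrt_le_left (by positivity)]
        nlinarith [sin_sq_add_cos_sq θ, mul_nonneg (mul_nonneg (sqrt_nonneg (1 - k ^ 2)) hsin) hcos,
          hk']
  rwa [intervalIntegral.integral_add (g := fun θ => k' * sin θ)
    (continuous_cos.intervalIntegrable _ _)
    ((continuous_const.mul continuous_sin).intervalIntegrable _ _), integral_cos,
    intervalIntegral.integral_const_mul, integral_sin, sin_pi_div_two, cos_pi_div_two,
    sin_zero, cos_zero, sub_zero, mul_one] at h

lemma tendsto_ellipticE_sqrt_one_sub_sq_zero :
    Tendsto (fun k : ℝ => EllipticE √(1 - k ^ 2)) (𝓝 0) (𝓝 1) := by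
  have hk (k : ℝ) : √(1 - k ^ 2) ^ 2 ≤ 1 :=
    pow_le_one₀ (sqrt_nonneg _) (sqrt_le_one.mpr (by nlinarith))
  have hupper : Tendsto (fun k : ℝ => 1 + √(1 - √(1 - k ^ 2) ^ 2)) (𝓝 0) (𝓝 1) := by
    have h : ContinuousAt (fun k : ℝ => 1 + √(1 - √(1 - k ^ 2) ^ 2)) 0 := by fun_prop
    simpa using h.tendsto
  exact tendsto_of_tendsto_of_tendsto_of_le_of_le tendsto_const_nhds hupper
    (fun k => one_le_ellipticE (hk k)) fun k => ellipticE_le (hk k)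

end Elliptic

/-- As `r → ∞`, the singular value function of the second kind `α(r)` tends to `1/π`. -/
theorem alphaS_tendsto_one_div_pi :
    Tendsto alphaS atTop (nhds (1 / π)) := by
  have hK := tendsto_ellipticK_zero.comp tendsto_kSing_atTop
  have hE := tendsto_ellipticE_sqrt_one_sub_sq_zero.comp tendsto_kSing_atTop
  have hα := (hE.div hK (by positivity)).sub
    (tendsto_const_nhds (x := π).div ((hK.pow 2).const_mul 4) (by positivity))
  have hvalue : 1 / (π / 2) - π / (4 * (π / 2) ^ 2) = 1 / π := by
    field_simp
    ring
  rwa [hvalue] at hα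
end
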